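/- Let w ∈ ℂ. The function g(z) := ∑_{n=0}^∞ ((1+z/2)_n/(3/2)_n)·(w²/4)^n/n! = ₁F₁(1 + z/2; 3/2; w²/4) is complex differentiable at z = 0, and 2·g′(0) = ∑_{n=0}^∞ ((w²/4)^n/(3/2)_n)·(ψ(n+1) + γ). Likewise h(z) := ₁F₁(1 − z/2; 3/2; w²/4) satisfies −2·h′(0) = ∑_{n=0}^∞ ((w²/4)^n/(3/2)_n)·(ψ(n+1) + γ). -/

import Mathlib

noncomputable section
open Complex MeasureTheory Set Filter Topology

/-- Pochhammer symbol `(a)_n`. -/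
def poch (a : ℂ) (n : ℕ) : ℂ := (ascPochhammer ℂ n).eval a

/-- Confluent hypergeometric function `₁F₁(a; c; z)`. -/
def oneF1 (a c z : ℂ) : ℂ := ∑' n : ℕ, poch a n / poch c n * z ^ n / (n.factorial : ℂ)

/-- Complex error function, defined by integrating along the segment from `0` to `w`. -/
def cerf (w : ℂ) : ℂ :=
  (2 / (Real.sqrt Real.pi : ℂ)) * ∫ t in (0:ℝ)..1, w * Complex.exp (-(t * w) ^ 2)

/-- Complex imaginary error function. -/
def cerfi (w : ℂ) : ℂ :=
  (2 / (Real.sqrt Real.pi : ℂ)) * ∫ t in (0:ℝ)..1, w * Complex.exp ((t * w) ^ 2)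

/-- Digamma function `ψ = Γ'/Γ`. -/
def digam (x : ℝ) : ℝ := deriv Real.Gamma x / Real.Gamma x

/-! Since `‖(a)ₙ‖ ≤ (‖a‖)ₙ ≤ (c)ₙ` for `‖a‖ ≤ c`, the terms of `₁F₁(a; c; x)` are dominated by
`‖x‖ⁿ / n!` on the disc `‖a‖ < c`, so `a ↦ ₁F₁(a; c; x)` is holomorphic there and can be
differentiated termwise. At `a = 1` the derivative of `(a)ₙ` is `n! Hₙ`, and `ψ(n + 1) + γ = Hₙ`;
the chain rule through `a = 1 ± z/2` contributes the factor `±1/2`. -/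

lemma poch_succ (a : ℂ) (n : ℕ) : poch a (n + 1) = poch a n * (a + n) :=
  ascPochhammer_succ_eval n a

lemma poch_one (n : ℕ) : poch 1 n = n.factorial := ascPochhammer_eval_one ℂ n

lemma poch_ofReal (r : ℝ) (n : ℕ) : poch r n = (((ascPochhammer ℝ n).eval r : ℝ) : ℂ) := by
  induction n with
  | zero => simp [poch]
  | succ n ih => rw [poch_succ, ih, ascPochhammer_succ_eval]; push_cast; rfl

lemma norm_poch_le {a : ℂ} {r : ℝ} (h : ‖a‖ ≤ r) (n : ℕ) :
    ‖poch a n‖ ≤ (ascPochhammer ℝ n).eval r := by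
  induction n with
  | zero => simp [poch]
  | succ n ih =>
    rw [poch_succ, ascPochhammer_succ_eval, norm_mul]
    have hlin : ‖a + n‖ ≤ r + n := (norm_add_le _ _).trans (by simpa using h)
    exact mul_le_mul ih hlin (norm_nonneg _) ((norm_nonneg _).trans ih)

lemma hasDerivAt_poch_one (n : ℕ) :
    HasDerivAt (fun a => poch a n) (n.factorial * harmonic n : ℂ) 1 := by
  induction n with
  | zero => simpa [poch] using hasDerivAt_const (1 : ℂ) (1 : ℂ)
  | succ n ih =>
    simp only [poch_succ]
    refine (ih.mul ((hasDerivAt_id' 1).add_const (n : ℂ))).congr_deriv ?_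
    rw [poch_one, harmonic_succ, Nat.factorial_succ]
    push_cast
    field_simp
    ring

lemma digam_natCast_add_one (n : ℕ) :
    digam (n + 1) = harmonic n - Real.eulerMascheroniConstant := by
  rw [digam, Real.deriv_Gamma_nat, Real.Gamma_nat_eq_factorial,
    mul_div_cancel_left₀ _ (by positivity), sub_eq_neg_add]

lemma norm_oneF1_term_le {a : ℂ} {c : ℝ} (hc : 0 < c) (ha : ‖a‖ ≤ c) (x : ℂ) (n : ℕ) :
    ‖poch a n / poch c n * x ^ n / n.factorial‖ ≤ ‖x‖ ^ n / n.factorial := by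
  have hpos := ascPochhammer_pos n c hc
  have hratio : ‖poch a n‖ / ‖poch c n‖ ≤ 1 := by
    rw [poch_ofReal, norm_real, Real.norm_of_nonneg hpos.le]
    exact div_le_one_of_le₀ (norm_poch_le ha n) hpos.le
  rw [norm_div, norm_mul, norm_div, norm_pow, norm_natCast]
  gcongr
  exact mul_le_of_le_one_left (by positivity) hratio

theorem hasDerivAt_oneF1_fst {c : ℝ} (x : ℂ) {a : ℂ} (ha : ‖a‖ < c) :
    HasDerivAt (fun b => oneF1 b c x)
      (∑' n : ℕ, deriv (fun b => poch b n) a / poch c n * x ^ n / n.factorial) a := by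
  set F : ℕ → ℂ → ℂ := fun n b => poch b n / poch c n * x ^ n / n.factorial
  have hc : 0 < c := (norm_nonneg a).trans_lt ha
  have hpoch : ∀ n, Differentiable ℂ (fun b => poch b n) := fun n =>
    (ascPochhammer ℂ n).differentiable
  have hF : ∀ n, DifferentiableOn ℂ (F n) (Metric.ball 0 c) := fun n =>
    (((hpoch n).div_const _).mul_const _).div_const _ |>.differentiableOn
  have hle : ∀ n, ∀ b ∈ Metric.ball (0 : ℂ) c, ‖F n b‖ ≤ ‖x‖ ^ n / n.factorial := fun n b hb =>
    norm_oneF1_term_le hc (mem_ball_zero_iff.mp hb).le x n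
  have ha_mem : a ∈ Metric.ball (0 : ℂ) c := mem_ball_zero_iff.mpr ha
  have hsum := Real.summable_pow_div_factorial ‖x‖
  have hdiff := differentiableOn_tsum_of_summable_norm hsum hF Metric.isOpen_ball hle
  have hterm : ∀ n, deriv (F n) a = deriv (fun b => poch b n) a / poch c n * x ^ n / n.factorial :=
    fun n => by
      rw [deriv_div_const, deriv_mul_const ((hpoch n).differentiableAt.div_const _),
        deriv_div_const]
  have h := (hdiff.differentiableAt (Metric.isOpen_ball.mem_nhds ha_mem)).hasDerivAt
  rwa [← (hasSum_deriv_of_summable_norm hsum hF Metric.isOpen_ball hle ha_mem).tsum_eq,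
    tsum_congr hterm] at h

/-- Differentiability at `z = 0` of `z ↦ ₁F₁(1 ± z/2; 3/2; w²/4)` and evaluation of the
derivatives (equations (2.10)–(2.11) of Dixit–Kumar). -/
theorem deriv_oneF1_at_zero (w : ℂ) :
    (DifferentiableAt ℂ (fun z : ℂ => oneF1 (1 + z / 2) (3/2) (w ^ 2 / 4)) 0 ∧
      2 * deriv (fun z : ℂ => oneF1 (1 + z / 2) (3/2) (w ^ 2 / 4)) 0
        = ∑' n : ℕ, (w ^ 2 / 4) ^ n / poch (3/2) n *
            ((digam (n + 1) : ℂ) + (Real.eulerMascheroniConstant : ℂ)))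
    ∧ (DifferentiableAt ℂ (fun z : ℂ => oneF1 (1 - z / 2) (3/2) (w ^ 2 / 4)) 0 ∧
      -2 * deriv (fun z : ℂ => oneF1 (1 - z / 2) (3/2) (w ^ 2 / 4)) 0
        = ∑' n : ℕ, (w ^ 2 / 4) ^ n / poch (3/2) n *
            ((digam (n + 1) : ℂ) + (Real.eulerMascheroniConstant : ℂ))) := by
  set x := w ^ 2 / 4
  set S := ∑' n : ℕ, x ^ n / poch (3/2) n *
    ((digam (n + 1) : ℂ) + (Real.eulerMascheroniConstant : ℂ))
  have hF : HasDerivAt (fun a => oneF1 a (3/2) x) S 1 := by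
    have h := hasDerivAt_oneF1_fst (c := 3/2) x (a := 1) (by norm_num)
    push_cast at h
    refine h.congr_deriv (tsum_congr fun n => ?_)
    rw [(hasDerivAt_poch_one n).deriv, digam_natCast_add_one]
    have hfac : (n.factorial : ℂ) ≠ 0 := Nat.cast_ne_zero.mpr n.factorial_ne_zero
    push_cast
    rw [sub_add_cancel]
    field_simp
  have hplus : HasDerivAt (fun z => oneF1 (1 + z / 2) (3/2) x) (S * (1 / 2)) 0 :=
    hF.comp_of_eq 0 (((hasDerivAt_id 0).div_const 2).const_add 1) (by norm_num)
  have hminus : HasDerivAt (fun z => oneF1 (1 - z / 2) (3/2) x) (S * -(1 / 2)) 0 :=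
    hF.comp_of_eq 0 (((hasDerivAt_id 0).div_const 2).const_sub 1) (by norm_num)
  refine ⟨⟨hplus.differentiableAt, ?_⟩, hminus.differentiableAt, ?_⟩
  · rw [hplus.deriv]; ring
  · rw [hminus.deriv]; ring
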